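/- arXiv:1504.03717 — 4 statements merged into one kernel-verified Lean document; each statement's English description precedes it below -/
import Mathlib

section
/- Let y and z be unit quaternions and set a = z·conj y, b = conj y·z. Then the simple rotation x ↦ a·x·b fixes pointwise the intersection of the two hyperplanes orthogonal to y and to z: for every quaternion x with ⟪x,y⟫ = 0 and ⟪x,z⟫ = 0, one has (z·conj y)·x·(conj y·z) = x. -/
open Quaternion
open scoped InnerProductSpace

lemma anticomm_of_inner_zero (x w : ℍ[ℝ]) (h : ⟪x, w⟫_ℝ = 0) :
    w * star x = -(x * star w) := by
  rw [Quaternion.inner_def] at h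
  have hstar : star (x * star w) = -(x * star w) := Quaternion.star_eq_neg.mpr h
  simpa [star_mul] using hstar

/-- Let `y` and `z` be unit quaternions, `a = z * conj y`, `b = conj y * z`. The simple
rotation `x ↦ a * x * b` fixes pointwise the intersection of the hyperplanes orthogonal
to `y` and to `z`. -/
theorem simple_rotation_fixes_plane (y z : ℍ[ℝ]) (hy : ‖y‖ = 1) (hz : ‖z‖ = 1) :
    ∀ x : ℍ[ℝ], ⟪x, y⟫_ℝ = 0 → ⟪x, z⟫_ℝ = 0 →
      (z * star y) * x * (star y * z) = x := by
  intro x hxy hxz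
  have hny : (star y) * y = 1 := by
    rw [Quaternion.star_mul_self, Quaternion.normSq_eq_norm_mul_self, hy]
    norm_num
  have hnz : (star z) * z = 1 := by
    rw [Quaternion.star_mul_self, Quaternion.normSq_eq_norm_mul_self, hz]
    norm_num
  have e1 : x * star y = -(y * star x) := by
    rw [anticomm_of_inner_zero x y hxy, neg_neg]
  have e2 : z * star x = -(x * star z) := anticomm_of_inner_zero x z hxz
  calc (z * star y) * x * (star y * z)
      = z * (star y * (x * star y)) * z := by simp [mul_assoc]
    _ = z * (star y * -(y * star x)) * z := by rw [e1]
    _ = z * -((star y * y) * star x) * z := by simp [mul_assoc]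
    _ = -(z * star x) * z := by rw [hny]; simp
    _ = (x * star z) * z := by rw [e2, neg_neg]
    _ = x := by rw [mul_assoc, hnz, mul_one]
end

section
/- (Theorem 1) Let f : x ↦ a·x·b and g : x ↦ c·x·d be simple rotations, where f is the composition of the reflections R_y and R_z (so a = z·conj y, b = conj y·z) and g is the composition of the reflections R_u and R_w (so c = w·conj u, d = conj u·w), with y, z, u, w unit quaternions. Then the composition g ∘ f : x ↦ (c·a)·x·(b·d) is a simple rotation, i.e. Re(c·a) = Re(b·d), if and only if the four normals y, z, u, w are linearly dependent over ℝ. -/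
/-!
`Re (c a) - Re (b d) = Re (w ū z ȳ) - Re (ȳ z ū w)` is a quadrilinear form in `y, z, u, w`, and
expanding it in coordinates shows it is `-2` times the determinant of the four normals in the
basis `1, i, j, k`; this vanishes exactly when they are linearly dependent.
-/

open Quaternion

theorem Module.Basis.linearIndependent_iff_det_ne_zero {K V ι : Type*} [Field K]
    [AddCommGroup V] [Module K V] [Fintype ι] [DecidableEq ι] (e : Module.Basis ι K V)
    {v : ι → V} : LinearIndependent K v ↔ e.det v ≠ 0 := by
  have : FiniteDimensional K V := .of_basis e
  rw [← isUnit_iff_ne_zero, ← e.is_basis_iff_det]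
  exact ⟨fun h => ⟨h, h.span_eq_top_of_card_eq_finrank' (finrank_eq_card_basis e).symm⟩, And.left⟩

noncomputable def Quaternion.basisOneIJK (R : Type*) [CommRing R] : Module.Basis (Fin 4) R ℍ[R] :=
  QuaternionAlgebra.basisOneIJK (-1) 0 (-1)

theorem Quaternion.coe_basisOneIJK_repr {R : Type*} [CommRing R] (q : ℍ[R]) :
    (Quaternion.basisOneIJK R).repr q = ![q.re, q.imI, q.imJ, q.imK] :=
  rfl

theorem Quaternion.re_mul_star_mul_sub_re_star_mul_mul {R : Type*} [CommRing R]
    (y z u w : ℍ[R]) :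
    (w * star u * (z * star y)).re - (star y * z * (star u * w)).re =
      -2 * (basisOneIJK R).det ![y, z, u, w] := by
  rw [Module.Basis.det_apply, Matrix.det_succ_row_zero, Fin.sum_univ_four]
  simp only [re_mul, imI_mul, imJ_mul, imK_mul, re_star, imI_star, imJ_star, imK_star,
    Matrix.det_fin_three, Matrix.submatrix_apply, Module.Basis.toMatrix_apply,
    coe_basisOneIJK_repr, Matrix.cons_val, Fin.succAbove, Fin.reduceCastSucc, Fin.reduceSucc,
    Fin.reduceLT, ↓reduceIte, Fin.coe_ofNat_eq_mod]
  ring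

theorem composition_simple_iff_normals_dependent_general (y z u w : ℍ[ℝ])
    (a b c d : ℍ[ℝ])
    (hA : a = z * star y) (hB : b = star y * z)
    (hC : c = w * star u) (hD : d = star u * w) :
    (c * a).re = (b * d).re ↔ ¬ LinearIndependent ℝ ![y, z, u, w] := by
  subst hA hB hC hD
  rw [← sub_eq_zero, re_mul_star_mul_sub_re_star_mul_mul,
    (basisOneIJK ℝ).linearIndependent_iff_det_ne_zero, not_not]
  simp

/-- (Theorem 1) Let `f : x ↦ a x b` and `g : x ↦ c x d` be simple rotations, where `f` is
the composition of the reflections `R_y` and `R_z` (so `a = z conj y`, `b = conj y z`) and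
`g` is the composition of the reflections `R_u` and `R_w` (so `c = w conj u`,
`d = conj u w`), with `y, z, u, w` unit quaternions. Then `g ∘ f : x ↦ (c a) x (b d)` is a
simple rotation, i.e. `Re (c a) = Re (b d)`, iff the four normals `y, z, u, w` are
linearly dependent over `ℝ`. -/
theorem composition_simple_iff_normals_dependent (y z u w : ℍ[ℝ])
    (hy : ‖y‖ = 1) (hz : ‖z‖ = 1) (hu : ‖u‖ = 1) (hw : ‖w‖ = 1)
    (a b c d : ℍ[ℝ])
    (hA : a = z * star y) (hB : b = star y * z)
    (hC : c = w * star u) (hD : d = star u * w) :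
    (c * a).re = (b * d).re ↔ ¬ LinearIndependent ℝ ![y, z, u, w] :=
  composition_simple_iff_normals_dependent_general y z u w a b c d hA hB hC hD
end

section
/- (Corollary) Let y, z, u, w be unit quaternions, let f : x ↦ (z·conj y)·x·(conj y·z) and g : x ↦ (w·conj u)·x·(conj u·w) be simple rotations with pointwise invariant planes Π_f = {x ∈ ℍ : ⟪x,y⟫ = ⟪x,z⟫ = 0} and Π_g = {x ∈ ℍ : ⟪x,u⟫ = ⟪x,w⟫ = 0}. Then the composition g ∘ f : x ↦ ((w·conj u)·(z·conj y))·x·((conj y·z)·(conj u·w)) is a simple rotation, i.e. Re((w·conj u)·(z·conj y)) = Re((conj y·z)·(conj u·w)), if and only if Π_f ∩ Π_g ≠ {0}, i.e. there exists a nonzero quaternion x with ⟪x,y⟫ = ⟪x,z⟫ = ⟪x,u⟫ = ⟪x,w⟫ = 0. -/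
/-!
The difference `Re ((w ū)(z ȳ)) - Re ((ȳ z)(ū w))` is a polynomial in the sixteen coordinates of
`y, z, u, w`, and it equals `-2 det (y, z, u, w)`. Four vectors of `ℝ⁴` have a nonzero common
orthogonal vector exactly when they fail to span, i.e. when their determinant vanishes.
-/

open Quaternion
open scoped InnerProductSpace

open Submodule in
theorem Submodule.mem_orthogonal_span_range_iff {𝕜 E ι : Type*} [RCLike 𝕜] [NormedAddCommGroup E]
    [InnerProductSpace 𝕜 E] {v : ι → E} {x : E} :
    x ∈ (span 𝕜 (Set.range v))ᗮ ↔ ∀ i, ⟪x, v i⟫_𝕜 = 0 := by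
  rw [mem_orthogonal']
  refine ⟨fun h i => h _ (subset_span ⟨i, rfl⟩), fun h u hu => ?_⟩
  have hker : Set.range v ⊆ LinearMap.ker (innerₛₗ 𝕜 x) := Set.range_subset_iff.mpr h
  simpa using span_le.mpr hker hu

open Module Submodule in
theorem Module.Basis.det_eq_zero_iff_exists_ne_zero_forall_inner_eq_zero {𝕜 E ι : Type*}
    [RCLike 𝕜] [NormedAddCommGroup E] [InnerProductSpace 𝕜 E] [FiniteDimensional 𝕜 E]
    [Fintype ι] [DecidableEq ι] (b : Basis ι 𝕜 E) (v : ι → E) :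
    b.det v = 0 ↔ ∃ x ≠ 0, ∀ i, ⟪x, v i⟫_𝕜 = 0 := by
  have hcard : Fintype.card ι = finrank 𝕜 E := (finrank_eq_card_basis b).symm
  have hspan : b.det v ≠ 0 ↔ span 𝕜 (Set.range v) = ⊤ := by
    rw [← isUnit_iff_ne_zero, ← b.is_basis_iff_det]
    exact ⟨And.right, fun h => ⟨linearIndependent_of_top_le_span_of_card_eq_finrank h.ge hcard, h⟩⟩
  rw [← not_not (a := b.det v = 0), ← ne_eq, hspan, ← orthogonal_eq_bot_iff, ← ne_eq,
    Submodule.ne_bot_iff]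
  simp_rw [mem_orthogonal_span_range_iff]
  exact exists_congr fun _ => and_comm

theorem Quaternion.re_mul_sub_re_mul_eq_neg_two_mul_det (a b c d : ℍ[ℝ]) :
    (d * star c * (b * star a)).re - (star a * b * (star c * d)).re =
      -2 * (QuaternionAlgebra.basisOneIJK (-1 : ℝ) 0 (-1)).det ![a, b, c, d] := by
  simp only [re_mul, re_star, imI_star, imJ_star, imK_star, imI_mul, imJ_mul, imK_mul,
    Module.Basis.det_apply, Module.Basis.toMatrix_apply, QuaternionAlgebra.coe_basisOneIJK_repr,
    Matrix.det_succ_row_zero, Fin.sum_univ_succ, Matrix.submatrix_apply, Fin.succAbove,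
    Matrix.cons_val, Fin.reduceLT, Fin.reduceSucc, Fin.reduceCastSucc, ite_true, ite_false]
  norm_num
  ring

theorem composition_simple_iff_planes_intersect_general (y z u w : ℍ[ℝ]) :
    ((w * star u) * (z * star y)).re = ((star y * z) * (star u * w)).re ↔
      ∃ x : ℍ[ℝ], x ≠ 0 ∧ ⟪x, y⟫_ℝ = 0 ∧ ⟪x, z⟫_ℝ = 0 ∧ ⟪x, u⟫_ℝ = 0 ∧ ⟪x, w⟫_ℝ = 0 := by
  rw [← sub_eq_zero, re_mul_sub_re_mul_eq_neg_two_mul_det, mul_eq_zero_iff_left (by norm_num)]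
  -- `basisOneIJK` lives on `ℍ[ℝ,-1,0,-1]`, which `rw` does not unify with `ℍ[ℝ]`.
  refine (Module.Basis.det_eq_zero_iff_exists_ne_zero_forall_inner_eq_zero (E := ℍ[ℝ]) _ _).trans ?_
  simp [Fin.forall_fin_succ]

/-- (Corollary) Let `y, z, u, w` be unit quaternions and let
`f : x ↦ (z conj y) x (conj y z)` and `g : x ↦ (w conj u) x (conj u w)` be simple
rotations with pointwise invariant planes `Π_f = {x : ⟪x,y⟫ = ⟪x,z⟫ = 0}` and
`Π_g = {x : ⟪x,u⟫ = ⟪x,w⟫ = 0}`. Then `g ∘ f` is a simple rotation, i.e.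
`Re ((w conj u)(z conj y)) = Re ((conj y z)(conj u w))`, iff `Π_f ∩ Π_g ≠ {0}`. -/
theorem composition_simple_iff_planes_intersect (y z u w : ℍ[ℝ])
    (hy : ‖y‖ = 1) (hz : ‖z‖ = 1) (hu : ‖u‖ = 1) (hw : ‖w‖ = 1) :
    ((w * star u) * (z * star y)).re = ((star y * z) * (star u * w)).re ↔
      ∃ x : ℍ[ℝ], x ≠ 0 ∧ ⟪x, y⟫_ℝ = 0 ∧ ⟪x, z⟫_ℝ = 0 ∧ ⟪x, u⟫_ℝ = 0 ∧ ⟪x, w⟫_ℝ = 0 :=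
  composition_simple_iff_planes_intersect_general y z u w
end

section
/- Let p be a pure quaternion with p² = −1, let α, β ∈ ℝ, let ε = ±1, and let f(x) = (cos α + (sin α)·p)·x·(cos β + ε·(sin β)·p) (the degenerate case q = ±p of a rotation of E⁴). Then the plane Λ₁ = Span{1, p} is invariant under f (in particular f(1) ∈ Span{1,p} and f(p) ∈ Span{1,p}), and the orthogonal plane Λ₂ = {x ∈ ℍ : Re x = 0 and ⟪x, p⟫ = 0} is also invariant under f: if Re x = 0 and ⟪x,p⟫ = 0, then Re f(x) = 0 and ⟪f(x), p⟫ = 0. -/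
/-!
Both factors `cos α + sin α • p` and `cos β + ε sin β • p` lie in `Span{1, p}`, which is closed
under multiplication because `p * p = -1`; this gives the invariance of `Λ₁`. The plane `Λ₂` is
stable under left and right multiplication by `p`, since `p` anticommutes with every pure
quaternion orthogonal to it, and hence under multiplication on either side by any element of
`Span{1, p}`.
-/

open Quaternion
open scoped InnerProductSpace

namespace Submodule

variable {R A : Type*} [CommRing R] [Ring A] [Algebra R A]

theorem mul_mem_span_one_pair {p a b : A} (hp : p * p = -1) (ha : a ∈ span R {1, p})
    (hb : b ∈ span R {1, p}) : a * b ∈ span R {1, p} := by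
  obtain ⟨r, s, rfl⟩ := mem_span_pair.1 ha
  obtain ⟨r', s', rfl⟩ := mem_span_pair.1 hb
  refine mem_span_pair.2 ⟨r * r' - s * s', r * s' + s * r', ?_⟩
  simp only [add_mul, mul_add, smul_mul_smul_comm, one_mul, mul_one, hp]
  module

theorem mul_mem_of_mem_span_one_pair_left {W : Submodule R A} {p a x : A}
    (hW : ∀ y ∈ W, p * y ∈ W) (ha : a ∈ span R {1, p}) (hx : x ∈ W) : a * x ∈ W := by
  obtain ⟨r, s, rfl⟩ := mem_span_pair.1 ha
  rw [add_mul, smul_mul_assoc, smul_mul_assoc, one_mul]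
  exact add_mem (smul_mem _ _ hx) (smul_mem _ _ (hW x hx))

theorem mul_mem_of_mem_span_one_pair_right {W : Submodule R A} {p b x : A}
    (hW : ∀ y ∈ W, y * p ∈ W) (hb : b ∈ span R {1, p}) (hx : x ∈ W) : x * b ∈ W := by
  obtain ⟨r, s, rfl⟩ := mem_span_pair.1 hb
  rw [mul_add, mul_smul_comm, mul_smul_comm, mul_one]
  exact add_mem (smul_mem _ _ hx) (smul_mem _ _ (hW x hx))

end Submodule

namespace Quaternion

theorem coe_add_coe_mul_mem_span_one_pair (r s : ℝ) (p : ℍ[ℝ]) :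
    (r : ℍ[ℝ]) + (s : ℍ[ℝ]) * p ∈ Submodule.span ℝ ({1, p} : Set ℍ[ℝ]) :=
  Submodule.mem_span_pair.2 ⟨r, s, by rw [coe_mul_eq_smul, ← coe_one, smul_coe, mul_one]⟩

theorem re_mul_eq_neg_inner {p : ℍ[ℝ]} (hp : p.re = 0) (x : ℍ[ℝ]) :
    (x * p).re = -⟪x, p⟫_ℝ := by
  rw [inner_def, star_eq_neg.2 hp, mul_neg, re_neg, neg_neg]

theorem mul_comm_eq_neg_of_inner_eq_zero {p x : ℍ[ℝ]} (hp : p.re = 0) (hx : x.re = 0)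
    (hxp : ⟪x, p⟫_ℝ = 0) : p * x = -(x * p) := by
  have h := self_add_star (x * p)
  rw [star_mul, star_eq_neg.2 hp, star_eq_neg.2 hx, neg_mul_neg, re_mul_eq_neg_inner hp, hxp] at h
  simpa [eq_neg_iff_add_eq_zero, add_comm] using h

def orthogonalPlane (p : ℍ[ℝ]) : Submodule ℝ ℍ[ℝ] where
  carrier := {x | x.re = 0 ∧ ⟪x, p⟫_ℝ = 0}
  add_mem' ha hb := ⟨by simp [ha.1, hb.1], by simp [inner_add_left, ha.2, hb.2]⟩
  zero_mem' := ⟨rfl, inner_zero_left _⟩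
  smul_mem' c x hx := ⟨by simp [hx.1], by simp [real_inner_smul_left, hx.2]⟩

theorem mul_mem_orthogonalPlane_right {p x : ℍ[ℝ]} (hp : p.re = 0) (hpp : p * p = -1)
    (hx : x ∈ orthogonalPlane p) : x * p ∈ orthogonalPlane p := by
  refine ⟨by rw [re_mul_eq_neg_inner hp, hx.2, neg_zero], ?_⟩
  rw [← neg_eq_zero, ← re_mul_eq_neg_inner hp, mul_assoc, hpp, mul_neg_one, re_neg, hx.1,
    neg_zero]

theorem mul_mem_orthogonalPlane_left {p x : ℍ[ℝ]} (hp : p.re = 0) (hpp : p * p = -1)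
    (hx : x ∈ orthogonalPlane p) : p * x ∈ orthogonalPlane p := by
  rw [mul_comm_eq_neg_of_inner_eq_zero hp hx.1 hx.2]
  exact neg_mem (mul_mem_orthogonalPlane_right hp hpp hx)

end Quaternion

theorem degenerate_rotation_invariant_planes_general (p : ℍ[ℝ]) (hp : p.re = 0)
    (hp2 : p ^ 2 = -1) (α β ε : ℝ) (f : ℍ[ℝ] → ℍ[ℝ])
    (hf : ∀ x, f x = ((Real.cos α : ℍ[ℝ]) + (Real.sin α : ℍ[ℝ]) * p) * x *
        ((Real.cos β : ℍ[ℝ]) + (ε : ℍ[ℝ]) * (Real.sin β : ℍ[ℝ]) * p)) :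
    f 1 ∈ Submodule.span ℝ ({1, p} : Set ℍ[ℝ]) ∧
    f p ∈ Submodule.span ℝ ({1, p} : Set ℍ[ℝ]) ∧
    (∀ x ∈ Submodule.span ℝ ({1, p} : Set ℍ[ℝ]),
      f x ∈ Submodule.span ℝ ({1, p} : Set ℍ[ℝ])) ∧
    (∀ x : ℍ[ℝ], x.re = 0 → ⟪x, p⟫_ℝ = 0 → (f x).re = 0 ∧ ⟪f x, p⟫_ℝ = 0) := by
  have hpp : p * p = -1 := by rw [← sq, hp2]
  have ha := coe_add_coe_mul_mem_span_one_pair (Real.cos α) (Real.sin α) p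
  have hb := coe_add_coe_mul_mem_span_one_pair (Real.cos β) (ε * Real.sin β) p
  rw [coe_mul] at hb
  have hΛ₁ : ∀ x ∈ Submodule.span ℝ ({1, p} : Set ℍ[ℝ]),
      f x ∈ Submodule.span ℝ ({1, p} : Set ℍ[ℝ]) := fun x hx => by
    rw [hf]
    exact Submodule.mul_mem_span_one_pair hpp (Submodule.mul_mem_span_one_pair hpp ha hx) hb
  refine ⟨hΛ₁ 1 (Submodule.subset_span (by simp)), hΛ₁ p (Submodule.subset_span (by simp)),
    hΛ₁, fun x hx hxp => ?_⟩
  have hΛ₂ : x ∈ orthogonalPlane p := ⟨hx, hxp⟩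
  rw [hf]
  exact Submodule.mul_mem_of_mem_span_one_pair_right
    (fun _ => mul_mem_orthogonalPlane_right hp hpp) hb
    (Submodule.mul_mem_of_mem_span_one_pair_left
      (fun _ => mul_mem_orthogonalPlane_left hp hpp) ha hΛ₂)

/-- Let `p` be a pure quaternion with `p² = -1`, `α β : ℝ`, `ε = ±1`, and
`f x = (cos α + (sin α) p) * x * (cos β + ε (sin β) p)` (the degenerate case `q = ±p`).
Then the plane `Λ₁ = Span{1, p}` is invariant under `f` (in particular
`f 1, f p ∈ Span{1, p}`), and the orthogonal plane
`Λ₂ = {x : Re x = 0 ∧ ⟪x, p⟫ = 0}` is also invariant under `f`. -/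
theorem degenerate_rotation_invariant_planes (p : ℍ[ℝ]) (hp : p.re = 0)
    (hp2 : p ^ 2 = -1) (α β ε : ℝ) (hε : ε = 1 ∨ ε = -1) (f : ℍ[ℝ] → ℍ[ℝ])
    (hf : ∀ x, f x = ((Real.cos α : ℍ[ℝ]) + (Real.sin α : ℍ[ℝ]) * p) * x *
        ((Real.cos β : ℍ[ℝ]) + (ε : ℍ[ℝ]) * (Real.sin β : ℍ[ℝ]) * p)) :
    f 1 ∈ Submodule.span ℝ ({1, p} : Set ℍ[ℝ]) ∧
    f p ∈ Submodule.span ℝ ({1, p} : Set ℍ[ℝ]) ∧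
    (∀ x ∈ Submodule.span ℝ ({1, p} : Set ℍ[ℝ]),
      f x ∈ Submodule.span ℝ ({1, p} : Set ℍ[ℝ])) ∧
    (∀ x : ℍ[ℝ], x.re = 0 → ⟪x, p⟫_ℝ = 0 → (f x).re = 0 ∧ ⟪f x, p⟫_ℝ = 0) :=
  degenerate_rotation_invariant_planes_general p hp hp2 α β ε f hf
end
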